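/- Let N be a metric space and let φ: N → [0,1] be a 1-Lipschitz function such that the image φ(N) has Lebesgue measure 1 in [0,1]. Assume that for every t ∈ φ(N) there exists x ∈ N with φ(x) = t and Lip φ(x) = 1, where Lip φ(x) denotes the pointwise Lipschitz constant of φ at x. Then the composition operator C_φ is isometric: ‖f ∘ φ‖ = ‖f‖ for every Lipschitz function f: [0,1] → ℝ. -/

import Mathlib

/-!
Composition with a `1`-Lipschitz map never increases the Lipschitz norm. For the converse,
extend `f` to a Lipschitz `F : ℝ → ℝ`. If `F` is differentiable at `t = φ x` with
`Lip φ(x) = 1`, the difference quotients of `F ∘ φ` at `x` are those of `φ`, which cluster at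
`1`, times slopes of `F` that tend to `F'(t)`; hence `|F'(t)| ≤ ‖f ∘ φ‖`. Where `F` is not
differentiable, `deriv F = 0`. So `|F'| ≤ ‖f ∘ φ‖` outside a measurable set disjoint from
`φ(N)`, and that set is null because `φ(N)` has full outer measure in `[0,1]`. Integrating `F'`
(a Lipschitz function is absolutely continuous) gives `‖f‖ ≤ ‖f ∘ φ‖`.
-/

open Filter Topology

noncomputable def lipNorm {M : Type*} [MetricSpace M] (f : M → ℝ) : ℝ :=
  sSup {r : ℝ | ∃ x y : M, x ≠ y ∧ r = (f x - f y) / dist x y}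

/-- `Lip g(x)`. If `x` is isolated, `𝓝[≠] x = ⊥` and the real-valued `limsup` is `0`, matching
the paper's convention. -/
noncomputable def pLip {M : Type*} [MetricSpace M] (g : M → ℝ) (x : M) : ℝ :=
  Filter.limsup (fun y => (g y - g x) / dist y x) (𝓝[≠] x)

open MeasureTheory Set

section LipNorm

variable {M : Type*} [MetricSpace M]

theorem lipNorm_nonneg (f : M → ℝ) : 0 ≤ lipNorm f := by
  rw [lipNorm]
  set S := {r : ℝ | ∃ x y : M, x ≠ y ∧ r = (f x - f y) / dist x y}
  by_cases hS : BddAbove S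
  swap
  · exact (Real.sSup_of_not_bddAbove hS).ge
  by_cases hM : ∃ x y : M, x ≠ y
  · obtain ⟨x, y, hxy⟩ := hM
    have h₁ := le_csSup hS ⟨x, y, hxy, rfl⟩
    have h₂ := le_csSup hS ⟨y, x, hxy.symm, rfl⟩
    rw [dist_comm] at h₂
    have hsum : (f x - f y) / dist x y + (f y - f x) / dist x y = 0 := by ring
    linarith
  · push Not at hM
    have : S = ∅ := eq_empty_of_forall_notMem fun r ⟨x, y, hxy, _⟩ => hxy (hM x y)
    exact (congrArg sSup this).trans Real.sSup_empty |>.ge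

theorem lipNorm_le {f : M → ℝ} {L : ℝ} (hL : 0 ≤ L)
    (h : ∀ x y, |f x - f y| ≤ L * dist x y) : lipNorm f ≤ L := by
  refine Real.sSup_le ?_ hL
  rintro _ ⟨x, y, -, rfl⟩
  exact div_le_of_le_mul₀ dist_nonneg hL ((le_abs_self _).trans (h x y))

theorem LipschitzWith.abs_sub_le_lipNorm_mul_dist {K : NNReal} {f : M → ℝ}
    (hf : LipschitzWith K f) (x y : M) : |f x - f y| ≤ lipNorm f * dist x y := by
  have hS : BddAbove {r : ℝ | ∃ x y : M, x ≠ y ∧ r = (f x - f y) / dist x y} := by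
    refine ⟨K, ?_⟩
    rintro _ ⟨x, y, -, rfl⟩
    refine div_le_of_le_mul₀ dist_nonneg K.coe_nonneg ((le_abs_self _).trans ?_)
    simpa [Real.dist_eq] using hf.dist_le_mul x y
  rcases eq_or_ne x y with rfl | hxy
  · simp
  rw [← div_le_iff₀ (dist_pos.2 hxy)]
  rcases abs_cases (f x - f y) with ⟨h, -⟩ | ⟨h, -⟩ <;> rw [h]
  · exact le_csSup hS ⟨x, y, hxy, rfl⟩
  · exact le_csSup hS ⟨y, x, hxy.symm, by rw [dist_comm, neg_sub]⟩

theorem LipschitzWith.lipNorm_comp_le {N : Type*} [MetricSpace N] {K C : NNReal}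
    {f : M → ℝ} {φ : N → M} (hf : LipschitzWith K f) (hφ : LipschitzWith C φ) :
    lipNorm (f ∘ φ) ≤ lipNorm f * C :=
  lipNorm_le (mul_nonneg (lipNorm_nonneg f) C.coe_nonneg) fun a b =>
    (hf.abs_sub_le_lipNorm_mul_dist (φ a) (φ b)).trans <| by
      rw [mul_assoc]
      exact mul_le_mul_of_nonneg_left (hφ.dist_le_mul a b) (lipNorm_nonneg f)

end LipNorm

theorem Filter.Tendsto.mapClusterPt_prodMk {α X Y : Type*} [TopologicalSpace X]
    [TopologicalSpace Y] {l : Filter α} {u : α → X} {v : α → Y} {x : X} {y : Y}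
    (hu : Tendsto u l (𝓝 x)) (hv : MapClusterPt y l v) :
    MapClusterPt (x, y) l fun a => (u a, v a) := by
  rw [((𝓝 x).basis_sets.prod_nhds (𝓝 y).basis_sets).mapClusterPt_iff_frequently]
  rintro ⟨s, t⟩ ⟨hs, ht⟩
  exact ((mapClusterPt_iff_frequently.1 hv t ht).and_eventually (hu hs)).mono fun a h => ⟨h.2, h.1⟩

section PointwiseLip

variable {N : Type*} [MetricSpace N]

theorem pLip_eq_zero_of_not_neBot {g : N → ℝ} {x : N} (hx : ¬(𝓝[≠] x).NeBot) :
    pLip g x = 0 := by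
  rw [not_neBot] at hx
  simp [pLip, hx, limsup_eq]

theorem LipschitzWith.mapClusterPt_pLip {K : NNReal} {g : N → ℝ} (hg : LipschitzWith K g)
    {x : N} [(𝓝[≠] x).NeBot] :
    MapClusterPt (pLip g x) (𝓝[≠] x) fun y => (g y - g x) / dist y x := by
  have hq : ∀ y, |(g y - g x) / dist y x| ≤ K := fun y => by
    rw [abs_div, abs_of_nonneg dist_nonneg]
    exact div_le_of_le_mul₀ dist_nonneg K.coe_nonneg
      (by simpa [Real.dist_eq] using hg.dist_le_mul y x)
  exact MapClusterPt.limsup (isCoboundedUnder_le_of_le _ fun y => neg_le_of_abs_le (hq y))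
    (isBoundedUnder_of ⟨K, fun y => le_of_abs_le (hq y)⟩)

theorem abs_mul_pLip_le_lipNorm_comp_of_hasDerivAt {K₁ K₂ : NNReal} {ψ : N → ℝ} {F : ℝ → ℝ}
    (hψ : LipschitzWith K₁ ψ) (hFψ : LipschitzWith K₂ (F ∘ ψ)) {x : N} {c : ℝ}
    (hc : HasDerivAt F c (ψ x)) :
    |c * pLip ψ x| ≤ lipNorm (F ∘ ψ) := by
  by_cases hx : (𝓝[≠] x).NeBot
  swap
  · rw [pLip_eq_zero_of_not_neBot hx, mul_zero, abs_zero]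
    exact lipNorm_nonneg _
  -- the slope of `F` at `ψ x`, made continuous there, so that `F v - F (ψ x) = σ v * (v - ψ x)`
  set σ := Function.update (slope F (ψ x)) (ψ x) c
  have hσ : Tendsto (fun y => σ (ψ y)) (𝓝[≠] x) (𝓝 c) := by
    have : ContinuousAt σ (ψ x) := continuousAt_update_same.2 hc.tendsto_slope
    simpa [σ, Function.comp_def] using
      (this.comp hψ.continuous.continuousAt).tendsto.mono_left nhdsWithin_le_nhds
  have hquot : ∀ y, (F (ψ y) - F (ψ x)) / dist y x = σ (ψ y) * ((ψ y - ψ x) / dist y x) := by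
    intro y
    rw [← mul_div_assoc]
    congr 1
    rcases eq_or_ne (ψ y) (ψ x) with h | h
    · simp [h]
    · simpa [σ, h, mul_comm] using (sub_smul_slope F (ψ x) (ψ y)).symm
  have hclus : MapClusterPt (c * pLip ψ x) (𝓝[≠] x) fun y => (F (ψ y) - F (ψ x)) / dist y x := by
    simp_rw [hquot]
    exact (hσ.mapClusterPt_prodMk hψ.mapClusterPt_pLip).continuousAt_comp
      continuous_mul.continuousAt
  refine (isClosed_le continuous_abs continuous_const).mem_of_mapClusterPt hclus
    (Eventually.of_forall fun y => ?_)
  rw [mem_ofPred_eq, abs_div, abs_of_nonneg dist_nonneg]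
  exact div_le_of_le_mul₀ dist_nonneg (lipNorm_nonneg _) (hFψ.abs_sub_le_lipNorm_mul_dist y x)

end PointwiseLip

theorem ae_imp_of_measure_le_of_forall_mem {α : Type*} [MeasurableSpace α] {μ : Measure α}
    {E T : Set α} {p : α → Prop} (hp : MeasurableSet {x | p x}) (hET : E ⊆ T)
    (hμ : μ T ≤ μ E) (hT : μ T ≠ ⊤) (hE : ∀ x ∈ E, p x) : ∀ᵐ x ∂μ, x ∈ T → p x := by
  have hsplit := measure_inter_add_sdiff (μ := μ) T hp
  have hgood : μ T ≤ μ (T ∩ {x | p x}) := hμ.trans (measure_mono fun x hx => ⟨hET hx, hE x hx⟩)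
  have hbad : μ (T \ {x | p x}) = 0 := by
    rw [le_antisymm (measure_mono inter_subset_left) hgood] at hsplit
    exact (ENNReal.add_right_inj hT).1 (hsplit.trans (add_zero _).symm)
  exact measure_mono_null (fun x hx => Classical.not_imp.1 hx) hbad

theorem LipschitzOnWith.abs_sub_le_of_ae_abs_deriv_le {F : ℝ → ℝ} {K : NNReal} {a b C : ℝ}
    (hF : LipschitzOnWith K F (uIcc a b)) (h : ∀ᵐ x, x ∈ uIoc a b → |deriv F x| ≤ C) :
    |F b - F a| ≤ C * |b - a| := by
  rw [← hF.absolutelyContinuousOnInterval.integral_deriv_eq_sub]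
  simpa using intervalIntegral.norm_integral_le_of_norm_le_const_ae (f := deriv F) (a := a)
    (b := b) (C := C) (by simpa using h)

/-- If `φ : N → [0,1]` is `1`-Lipschitz, `φ(N)` has Lebesgue measure `1`
in `[0,1]`, and every `t ∈ φ(N)` admits a preimage `x` with pointwise Lipschitz constant
`Lip φ(x) = 1`, then the composition operator `C_φ` is isometric. -/
theorem stmt2 {N : Type*} [MetricSpace N]
    (φ : N → Set.Icc (0:ℝ) 1) (hφ : LipschitzWith 1 φ)
    (hmeas : MeasureTheory.volume ((fun t : Set.Icc (0:ℝ) 1 => (t : ℝ)) '' Set.range φ) = 1)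
    (hLip : ∀ t ∈ Set.range φ, ∃ x : N, φ x = t ∧ pLip (fun y => (φ y : ℝ)) x = 1) :
    ∀ f : Set.Icc (0:ℝ) 1 → ℝ, (∃ K : NNReal, LipschitzWith K f) →
      lipNorm (f ∘ φ) = lipNorm f := by
  rintro f ⟨K, hf⟩
  set ψ : N → ℝ := fun y => (φ y : ℝ)
  set F : ℝ → ℝ := f ∘ projIcc 0 1 zero_le_one
  have hψ : LipschitzWith 1 ψ := by
    simpa [ψ, Function.comp_def] using (LipschitzWith.subtype_val _).comp hφ
  have hF : LipschitzWith K F := by simpa using hf.comp (LipschitzWith.projIcc zero_le_one)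
  have hfφ : f ∘ φ = F ∘ ψ := funext fun y => by simp [F, ψ]
  refine le_antisymm (by simpa using hf.lipNorm_comp_le hφ) ?_
  rw [hfφ]
  have hderiv : ∀ v ∈ (fun t : Icc (0:ℝ) 1 => (t : ℝ)) '' range φ,
      |deriv F v| ≤ lipNorm (F ∘ ψ) := by
    rintro _ ⟨_, ⟨z, rfl⟩, rfl⟩
    obtain ⟨x, hxz, hx⟩ := hLip (φ z) ⟨z, rfl⟩
    by_cases hd : DifferentiableAt ℝ F (φ z)
    · have hc : HasDerivAt F (deriv F (φ z)) (ψ x) := by simpa [ψ, hxz] using hd.hasDerivAt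
      simpa [hx] using abs_mul_pLip_le_lipNorm_comp_of_hasDerivAt hψ (hF.comp hψ) hc
    · rw [deriv_zero_of_not_differentiableAt hd, abs_zero]
      exact lipNorm_nonneg _
  have hae : ∀ᵐ v, v ∈ Icc (0:ℝ) 1 → |deriv F v| ≤ lipNorm (F ∘ ψ) :=
    ae_imp_of_measure_le_of_forall_mem (measurableSet_le (measurable_deriv F).abs measurable_const)
      (by rintro _ ⟨t, -, rfl⟩; exact t.2) (by simp [hmeas]) (by simp) hderiv
  refine lipNorm_le (lipNorm_nonneg _) fun s t => ?_
  have hsub : uIcc (t : ℝ) s ⊆ Icc 0 1 := uIcc_subset_Icc t.2 s.2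
  have hFts := (hF.lipschitzOnWith (s := uIcc (t : ℝ) s)).abs_sub_le_of_ae_abs_deriv_le
    (hae.mono fun v hv hmem => hv (hsub (uIoc_subset_uIcc hmem)))
  simpa [F, abs_sub_comm, Subtype.dist_eq, Real.dist_eq] using hFts
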